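/- Let (X,p) be a partial metric space with p(ξ,ξ) = a for all ξ ∈ X (a > 0 a fixed constant), and let I be an admissible nontrivial ideal on ℕ. A sequence {ξ_n} in X is I-statistically bounded if and only if there exists a real number r > 0 such that the rough I-statistical limit set I-st-LIM^r ξ_n is nonempty. -/

import Mathlib

open Filter Topology

/-- A partial metric on a type `X`. -/
structure PartialMetric (X : Type*) where
  p : X → X → ℝ
  self_nonneg : ∀ x : X, 0 ≤ p x x
  self_le : ∀ x y : X, p x x ≤ p x y
  eq_iff : ∀ x y : X, x = y ↔ (p x x = p x y ∧ p x y = p y y)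
  symm : ∀ x y : X, p x y = p y x
  triangle : ∀ x y z : X, p x y ≤ p x z + p z y - p z z

/-- An admissible nontrivial ideal on ℕ. -/
structure IdealN where
  sets : Set (Set ℕ)
  empty_mem : ∅ ∈ sets
  subset_mem : ∀ A B : Set ℕ, A ∈ sets → B ⊆ A → B ∈ sets
  union_mem : ∀ A B : Set ℕ, A ∈ sets → B ∈ sets → A ∪ B ∈ sets
  admissible : ∀ n : ℕ, ({n} : Set ℕ) ∈ sets
  nontrivial : (Set.univ : Set ℕ) ∉ sets

open Classical in
/-- `cnt A n` = number of `k` with `1 ≤ k ≤ n` and `k ∈ A`. -/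
noncomputable def cnt (A : Set ℕ) (n : ℕ) : ℕ :=
  ((Finset.Icc 1 n).filter (fun k => k ∈ A)).card

/-- `I`-limit of a real sequence. -/
def ILim (I : IdealN) (a : ℕ → ℝ) (L : ℝ) : Prop :=
  ∀ ε > (0 : ℝ), {n : ℕ | ε ≤ |a n - L|} ∈ I.sets

/-- The rough `I`-statistical limit set of degree `r` of a sequence `x`. -/
def RSLim {X : Type*} (I : IdealN) (P : PartialMetric X) (x : ℕ → X) (r : ℝ) : Set X :=
  {ξ | ∀ ε > (0 : ℝ), ∀ δ > (0 : ℝ),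
    {n : ℕ | δ ≤ (cnt {k | r + ε ≤ |P.p (x k) ξ - P.p ξ ξ|} n : ℝ) / n} ∈ I.sets}

/- Both notions are statements that certain sets of indices are `I`-statistically null. By the
triangle inequality `p(ξ_k, u) - p(ξ, u) ≤ p(ξ_k, ξ) - p(ξ, ξ)`, the indices where `ξ_k` is far
from `u` are among those where it is far from a rough limit `ξ`; conversely, with `ξ := ξ_0`,
being far from `ξ_0` in the rough sense implies being far in the sense of boundedness. -/

def IStatNull (I : IdealN) (A : Set ℕ) : Prop :=
  ∀ δ > (0 : ℝ), {n : ℕ | δ ≤ (cnt A n : ℝ) / n} ∈ I.sets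

lemma cnt_mono {A B : Set ℕ} (h : A ⊆ B) (n : ℕ) : cnt A n ≤ cnt B n := by
  classical
  exact Finset.card_le_card (Finset.monotone_filter_right _ fun _ _ hk => h hk)

lemma IStatNull.mono {I : IdealN} {A B : Set ℕ} (hB : IStatNull I B) (h : A ⊆ B) :
    IStatNull I A := fun δ hδ =>
  I.subset_mem _ _ (hB δ hδ) fun n (hn : δ ≤ (cnt A n : ℝ) / n) =>
    hn.trans (div_le_div_of_nonneg_right (by exact_mod_cast cnt_mono h n) n.cast_nonneg)

namespace PartialMetric

variable {X : Type*} (P : PartialMetric X)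

lemma nonneg (x y : X) : 0 ≤ P.p x y :=
  (P.self_nonneg x).trans (P.self_le x y)

lemma abs_sub_self_eq (x y : X) : |P.p x y - P.p y y| = P.p x y - P.p y y := by
  rw [abs_of_nonneg (sub_nonneg.2 ((P.self_le y x).trans_eq (P.symm y x)))]

lemma sub_le_sub_self (x y u : X) : P.p x u - P.p y u ≤ P.p x y - P.p y y := by
  linarith [P.triangle x u y, P.symm y u]

end PartialMetric

theorem stmt_4_general {X : Type*} (I : IdealN) (P : PartialMetric X) (x : ℕ → X) :
    (∀ u : X, ∃ M > (0 : ℝ), ∀ δ > (0 : ℝ),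
      {n : ℕ | δ ≤ (cnt {k | M ≤ P.p (x k) u} n : ℝ) / n} ∈ I.sets)
    ↔ ∃ r > (0 : ℝ), (RSLim I P x r).Nonempty := by
  constructor
  · intro hbdd
    obtain ⟨M, hM, hnull⟩ := hbdd (x 0)
    refine ⟨M, hM, x 0, fun ε hε => IStatNull.mono hnull fun k hk => ?_⟩
    simp only [Set.mem_ofPred_eq, P.abs_sub_self_eq] at hk ⊢
    linarith [P.self_nonneg (x 0)]
  · rintro ⟨r, hr, ξ, hξ⟩ u
    refine ⟨r + 1 + P.p ξ u, by linarith [P.nonneg ξ u],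
      IStatNull.mono (hξ 1 one_pos) fun k hk => ?_⟩
    simp only [Set.mem_ofPred_eq, P.abs_sub_self_eq] at hk ⊢
    linarith [P.sub_le_sub_self (x k) ξ u]

theorem stmt_4 {X : Type*} (I : IdealN) (P : PartialMetric X) (x : ℕ → X)
    (a : ℝ) (ha : 0 < a) (hself : ∀ ξ : X, P.p ξ ξ = a) :
    (∀ u : X, ∃ M > (0 : ℝ), ∀ δ > (0 : ℝ),
      {n : ℕ | δ ≤ (cnt {k | M ≤ P.p (x k) u} n : ℝ) / n} ∈ I.sets)
    ↔ ∃ r > (0 : ℝ), (RSLim I P x r).Nonempty :=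
  stmt_4_general I P x
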